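/- If B is a skipping simulation on M and sBw, then for every state u with s → u, either uBw, or there exists v with w →^+ v and uBv. -/

import Mathlib

universe u v

section Defs

variable {S : Type u} {T : Type v}

/-- A fullpath of the transition relation `R`. -/
def FullPath (R : S → S → Prop) (σ : ℕ → S) : Prop := ∀ i, R (σ i) (σ (i+1))

/-- Strictly increasing sequences of naturals starting at 0. -/
def IsINC (π : ℕ → ℕ) : Prop := StrictMono π ∧ π 0 = 0

/-- Every element of the i-th segment of `σ` (w.r.t. `π`) is `B`-related to the
first element of the i-th segment of `δ` (w.r.t. `ξ`). -/
def Corr (B : S → T → Prop) (σ : ℕ → S) (π : ℕ → ℕ) (δ : ℕ → T) (ξ : ℕ → ℕ) : Prop :=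
  ∀ i n, π i ≤ n → n < π (i+1) → B (σ n) (δ (ξ i))

/-- `σ` matches `δ` under `B`. -/
def Match (B : S → T → Prop) (σ : ℕ → S) (δ : ℕ → T) : Prop :=
  ∃ π ξ, IsINC π ∧ IsINC ξ ∧ Corr B σ π δ ξ

/-- Skipping simulation. -/
def IsSKS {Lbl : Type v} (R : S → S → Prop) (L : S → Lbl) (B : S → S → Prop) : Prop :=
  ∀ s w, B s w →
    L s = L w ∧
    ∀ σ, FullPath R σ → σ 0 = s → ∃ δ, FullPath R δ ∧ δ 0 = w ∧ Match B σ δ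

/-- Well-founded skipping relation. -/
def IsWFSK {Lbl : Type v} (R : S → S → Prop) (L : S → Lbl) (B : S → S → Prop) : Prop :=
  (∀ s w, B s w → L s = L w) ∧
  ∃ (W : Type u) (lt : W → W → Prop) (_ : WellFounded lt)
    (rankt : S → S → W) (rankl : S → S → S → ℕ),
    ∀ s u w, R s u → B s w →
      (∃ v, R w v ∧ B u v) ∨
      (B u w ∧ lt (rankt u w) (rankt s w)) ∨
      (∃ v, R w v ∧ B s v ∧ rankl v s u < rankl w s u) ∨
      (∃ v, (∃ x, R w x ∧ Relation.TransGen R x v) ∧ B u v)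

/-- Reduced well-founded skipping relation. -/
def IsRWFSK {Lbl : Type v} (R : S → S → Prop) (L : S → Lbl) (B : S → S → Prop) : Prop :=
  (∀ s w, B s w → L s = L w) ∧
  ∃ (W : Type u) (lt : W → W → Prop) (_ : WellFounded lt) (rankt : S → S → W),
    ∀ s u w, R s u → B s w →
      (B u w ∧ lt (rankt u w) (rankt s w)) ∨
      (∃ v, Relation.TransGen R w v ∧ B u v)

/-- Nodes of the computation tree of `R` rooted at `s`, represented as the finite
path from the root. -/
def CtreeNode (R : S → S → Prop) (s : S) (l : List S) : Prop :=
  l.head? = some s ∧ l.Chain' R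

/-- Nodes of the tree `ranktCt(M,s,w)`: empty if `¬ B s w`; otherwise the largest
subtree of `ctree(M,s)` all of whose non-root nodes `⟨s,…,x⟩` satisfy `x B w` and
`¬ (x B v)` for every `v` with `w →⁺ v`. -/
def RanktCtNode (R : S → S → Prop) (B : S → S → Prop) (s w : S) (l : List S) : Prop :=
  B s w ∧ CtreeNode R s l ∧
  ∀ x ∈ l.tail, B x w ∧ ∀ v, Relation.TransGen R w v → ¬ B x v

/-- `c` is a child of `p` in the tree with node-predicate `T'`. -/
def ChildRel (T' : List S → Prop) (c p : List S) : Prop :=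
  T' c ∧ T' p ∧ ∃ v, c = p ++ [v]

-- The ordinal `size` of a node of a tree all of whose paths are finite:
-- `size(t,x) = ⋃_{c child of x} (size(t,c)+1)`.
open Classical in
noncomputable def nodeSize (T' : List S → Prop) (l : List S) : Ordinal.{u} :=
  if h : WellFounded (ChildRel T') then (h.apply l).rank else 0

/-- `size(ranktCt(M,s,w))`: the size of the root `⟨s⟩`. -/
noncomputable def treeSize (R : S → S → Prop) (B : S → S → Prop) (s w : S) : Ordinal.{u} :=
  nodeSize (RanktCtNode R B s w) [s]

end Defs

/-! Left-totality extends `s → u` to a fullpath `σ` from `s`, and the simulation matches `σ` with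
a fullpath `δ` from `w`. Then `u = σ 1` lies either in the first segment of `σ`, hence is related
to `δ 0 = w`, or starts the second one, hence is related to a strictly later state of `δ`. -/

section SkippingSimulation

variable {S : Type u} {T : Type v}

theorem FullPath.transGen {R : S → S → Prop} {δ : ℕ → S} (hδ : FullPath R δ) {m n : ℕ}
    (hmn : m < n) : Relation.TransGen R (δ m) (δ n) := by
  induction n, hmn using Nat.le_induction with
  | base => exact .single (hδ m)
  | succ n _ ih => exact ih.tail (hδ n)

theorem exists_fullPath_of_rel {R : S → S → Prop} (hR : ∀ s, ∃ u, R s u) {s u : S}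
    (hsu : R s u) : ∃ σ, FullPath R σ ∧ σ 0 = s ∧ σ 1 = u := by
  choose next hnext using hR
  refine ⟨fun | 0 => s | n + 1 => next^[n] u, ?_, rfl, rfl⟩
  rintro (_ | n)
  · exact hsu
  · simpa only [Function.iterate_succ_apply'] using hnext _

theorem Match.rel_one {B : S → T → Prop} {σ : ℕ → S} {δ : ℕ → T} (h : Match B σ δ) :
    B (σ 1) (δ 0) ∨ ∃ j, 0 < j ∧ B (σ 1) (δ j) := by
  obtain ⟨π, ξ, ⟨hπ, hπ0⟩, ⟨hξ, hξ0⟩, hcorr⟩ := h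
  have hπ1_pos : 0 < π 1 := hπ0 ▸ hπ Nat.zero_lt_one
  have hξ1 : 0 < ξ 1 := hξ0 ▸ hξ Nat.zero_lt_one
  have hπ12 : π 1 < π (1 + 1) := hπ Nat.one_lt_two
  by_cases hπ1 : π 1 = 1
  · exact .inr ⟨ξ 1, hξ1, hcorr 1 1 hπ1.le (by omega)⟩
  · exact .inl (hξ0 ▸ hcorr 0 1 (by omega) (by simp only [zero_add]; omega))

end SkippingSimulation

/-- If `B` is an SKS and `s B w`, then for every `u` with `s → u`,
either `u B w` or there is `v` with `w →⁺ v` and `u B v`. -/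
theorem sks_step {S : Type u} {Lbl : Type v}
    (R : S → S → Prop) (L : S → Lbl) (hR : ∀ s, ∃ u, R s u)
    (B : S → S → Prop) (h : IsSKS R L B)
    (s u w : S) (hsw : B s w) (hsu : R s u) :
    B u w ∨ ∃ v, Relation.TransGen R w v ∧ B u v := by
  obtain ⟨σ, hσ, hσ0, hσ1⟩ := exists_fullPath_of_rel hR hsu
  obtain ⟨δ, hδ, hδ0, hmatch⟩ := (h s w hsw).2 σ hσ hσ0
  subst hσ1 hδ0
  rcases hmatch.rel_one with hu | ⟨j, hj, hu⟩
  · exact .inl hu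
  · exact .inr ⟨δ j, hδ.transGen hj, hu⟩
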